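/- (Smith–Switzer–Wilkerson) For 0 ≤ s < n and 1 ≤ i ≤ n: D_i(Q_{n,s}) = (-1)^{s-1} Q_{n,0} if i = s > 0; D_n(Q_{n,s}) = (-1)^n Q_{n,0} Q_{n,s}; and D_i(Q_{n,s}) = 0 whenever i ∉ {s, n}. -/

import Mathlib

open MvPolynomial Matrix Finset

/-- `[e₁,…,eₙ]`: the determinant of the matrix with `(k,j)`-entry `x_j^{p^{e_k}}`. -/
noncomputable def bracket (p n : ℕ) (e : Fin n → ℕ) : MvPolynomial (Fin n) (ZMod p) :=
  (Matrix.of fun k j : Fin n => (X j : MvPolynomial (Fin n) (ZMod p)) ^ p ^ (e k)).det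

/-- `L_n = [0,1,…,n-1]`. -/
noncomputable def Ln (p n : ℕ) : MvPolynomial (Fin n) (ZMod p) :=
  bracket p n (fun k => (k : ℕ))

/-- `L_{n,s} = [0,1,…,ŝ,…,n]` (entry `s` omitted from `0,…,n`). -/
noncomputable def Lns (p n s : ℕ) : MvPolynomial (Fin n) (ZMod p) :=
  bracket p n (fun k => if (k : ℕ) < s then (k : ℕ) else (k : ℕ) + 1)

/-- The `i`-th primitive Steenrod–Milnor operation, as the `F_p`-derivation
with `D_i(x_j) = x_j^{p^i}`. -/
noncomputable def Dop (p n i : ℕ) :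
    Derivation (ZMod p) (MvPolynomial (Fin n) (ZMod p)) (MvPolynomial (Fin n) (ZMod p)) :=
  MvPolynomial.mkDerivation (ZMod p) (fun j : Fin n => (X j) ^ p ^ i)

/-- The action of a matrix `g` on `P_n` by linear substitution of the variables. -/
noncomputable def act (p n : ℕ) (g : Matrix (Fin n) (Fin n) (ZMod p)) :
    MvPolynomial (Fin n) (ZMod p) →ₐ[ZMod p] MvPolynomial (Fin n) (ZMod p) :=
  MvPolynomial.aeval (fun j : Fin n => ∑ k : Fin n, g j k • (X k : MvPolynomial (Fin n) (ZMod p)))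

section Aux

variable {p n : ℕ}

local notation "Poly" => MvPolynomial (Fin n) (ZMod p)

private lemma D_prod_zero {ι : Type*} (D : Derivation (ZMod p) Poly Poly)
    (s : Finset ι) (f : ι → Poly) (h : ∀ j ∈ s, D (f j) = 0) :
    D (∏ j ∈ s, f j) = 0 := by
  refine Finset.prod_induction f (fun a => D a = 0) (fun a b ha hb => ?_) (by simp) h
  show D (a * b) = 0
  rw [D.leibniz, show D a = 0 from ha, show D b = 0 from hb, smul_zero, smul_zero, add_zero]

private lemma D_prod_single {ι : Type*} [DecidableEq ι] (D : Derivation (ZMod p) Poly Poly)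
    (s : Finset ι) (f : ι → Poly) (i₀ : ι) (hi₀ : i₀ ∈ s)
    (h : ∀ j ∈ s, j ≠ i₀ → D (f j) = 0) :
    D (∏ j ∈ s, f j) = (∏ j ∈ s.erase i₀, f j) * D (f i₀) := by
  rw [← Finset.mul_prod_erase s f hi₀, D.leibniz,
    D_prod_zero D _ f (fun j hj => h j (Finset.mem_of_mem_erase hj) (Finset.ne_of_mem_erase hj)),
    smul_zero, zero_add, smul_eq_mul]

private lemma Dop_X_pow [Fact p.Prime] (i e : ℕ) (j : Fin n) :
    Dop p n i ((X j : Poly) ^ p ^ e) = if e = 0 then (X j : Poly) ^ p ^ i else 0 := by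
  have hD : Dop p n i (X j : Poly) = (X j : Poly) ^ p ^ i := by
    simp [Dop, mkDerivation_X]
  rcases Nat.eq_zero_or_pos e with he | he
  · subst he; simpa using hD
  · rw [if_neg he.ne', Derivation.leibniz_pow, ← Nat.cast_smul_eq_nsmul (ZMod p)]
    have : ((p ^ e : ℕ) : ZMod p) = 0 := by
      rw [Nat.cast_pow, ZMod.natCast_self, zero_pow he.ne']
    rw [this, zero_smul]

private lemma Dop_bracket_zero [Fact p.Prime] (i : ℕ) (e : Fin n → ℕ)
    (h : ∀ k, e k ≠ 0) : Dop p n i (bracket p n e) = 0 := by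
  classical
  unfold bracket
  rw [Matrix.det_apply', map_sum]
  refine Finset.sum_eq_zero fun σ _ => ?_
  rw [← zsmul_eq_mul, map_zsmul]
  rw [D_prod_zero _ _ _ (fun j _ => ?_), smul_zero]
  simp only [Matrix.of_apply]
  rw [Dop_X_pow, if_neg (h _)]

private lemma Dop_bracket_update [Fact p.Prime] (i : ℕ) (e : Fin n → ℕ) (k₀ : Fin n)
    (h0 : e k₀ = 0) (h : ∀ k, k ≠ k₀ → e k ≠ 0) :
    Dop p n i (bracket p n e) = bracket p n (Function.update e k₀ i) := by
  classical
  unfold bracket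
  rw [Matrix.det_apply', Matrix.det_apply', map_sum]
  refine Finset.sum_congr rfl fun σ _ => ?_
  rw [← zsmul_eq_mul, ← zsmul_eq_mul, map_zsmul]
  congr 1
  set i₀ := σ⁻¹ k₀ with hi₀def
  have hσi₀ : σ i₀ = k₀ := Equiv.apply_symm_apply σ k₀
  have hne : ∀ j : Fin n, j ≠ i₀ → σ j ≠ k₀ := by
    intro j hj hc
    exact hj (by rw [hi₀def, ← hc]; simp)
  rw [D_prod_single (Dop p n i) Finset.univ _ i₀ (Finset.mem_univ _) (fun j _ hj => ?_)]
  · rw [← Finset.prod_erase_mul Finset.univ _ (Finset.mem_univ i₀)]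
    congr 1
    · refine Finset.prod_congr rfl fun j hj => ?_
      simp only [Matrix.of_apply]
      rw [Function.update_of_ne (hne j (Finset.ne_of_mem_erase hj))]
    · simp only [Matrix.of_apply]
      rw [hσi₀, Dop_X_pow, if_pos h0, Function.update_self]
  · simp only [Matrix.of_apply]
    rw [Dop_X_pow, if_neg (h _ (hne j hj))]

private lemma bracket_permute (e : Fin n → ℕ) (σ : Equiv.Perm (Fin n)) :
    bracket p n (e ∘ σ) = ((Equiv.Perm.sign σ : ℤ) : Poly) * bracket p n e := by
  unfold bracket
  have : (Matrix.of fun k j : Fin n => (X j : Poly) ^ p ^ ((e ∘ σ) k)) =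
      (Matrix.of fun k j : Fin n => (X j : Poly) ^ p ^ (e k)).submatrix σ id := rfl
  rw [this, Matrix.det_permute]

private lemma bracket_eq_zero (e : Fin n → ℕ) (k₁ k₂ : Fin n) (hne : k₁ ≠ k₂)
    (he : e k₁ = e k₂) : bracket p n e = 0 := by
  refine Matrix.det_zero_of_row_eq hne ?_
  funext j
  simp [he]

private lemma Ln_eq_Lns : Ln p n = Lns p n n := by
  unfold Ln Lns
  exact congrArg (bracket p n) (funext fun k => (if_pos k.isLt).symm)

private lemma D_Lns_zero [Fact p.Prime] (i s : ℕ) (hi1 : 1 ≤ i) (hin : i ≤ n)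
    (hsn : s ≤ n) (his : i ≠ s) : Dop p n i (Lns p n s) = 0 := by
  classical
  unfold Lns
  rcases Nat.eq_zero_or_pos s with hs0 | hs1
  · subst hs0
    exact Dop_bracket_zero i _ (fun k => by simp)
  · have hn1 : 1 ≤ n := le_trans hs1 hsn
    have h0 : (fun k : Fin n => if (k : ℕ) < s then (k : ℕ) else (k : ℕ) + 1) ⟨0, hn1⟩ = 0 := by
      show (if (0:ℕ) < s then (0:ℕ) else 0 + 1) = 0
      rw [if_pos (show 0 < s by omega)]
    rw [Dop_bracket_update i _ ⟨0, hn1⟩ h0 (fun k hk => ?_)]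
    · -- repeated rows
      rcases lt_or_gt_of_ne his with hlt | hgt
      · refine bracket_eq_zero _ ⟨0, hn1⟩ ⟨i, lt_of_lt_of_le hlt hsn⟩ ?_ ?_
        · intro hc; exact absurd (congrArg Fin.val hc) (by simp; omega)
        · rw [Function.update_self, Function.update_of_ne, if_pos hlt]
          intro hc; exact absurd (congrArg Fin.val hc) (by simp; omega)
      · refine bracket_eq_zero _ ⟨0, hn1⟩ ⟨i - 1, by omega⟩ ?_ ?_
        · intro hc; exact absurd (congrArg Fin.val hc) (by simp; omega)
        · rw [Function.update_self, Function.update_of_ne, if_neg (by simp; omega)]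
          · simp; omega
          · intro hc; exact absurd (congrArg Fin.val hc) (by simp; omega)
    · -- other rows nonzero
      have hk' : (k : ℕ) ≠ 0 := fun hc => hk (Fin.ext hc)
      split <;> omega

private lemma D_Lns_self [Fact p.Prime] (s : ℕ) (hs1 : 1 ≤ s) (hsn : s ≤ n) :
    Dop p n s (Lns p n s) = (-1 : Poly) ^ (s - 1) * Lns p n 0 := by
  classical
  obtain ⟨m, rfl⟩ : ∃ m, n = m + 1 := ⟨n - 1, by omega⟩
  unfold Lns
  have hn1 : 1 ≤ m + 1 := by omega
  have h0 : (fun k : Fin (m+1) => if (k : ℕ) < s then (k : ℕ) else (k : ℕ) + 1) 0 = 0 := by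
    show (if (0:ℕ) < s then (0:ℕ) else 0 + 1) = 0
    rw [if_pos (show 0 < s by omega)]
  rw [Dop_bracket_update s _ 0 h0 (fun k hk => ?_)]
  · set e' : Fin (m+1) → ℕ :=
      Function.update (fun k : Fin (m+1) => if (k : ℕ) < s then (k : ℕ) else (k : ℕ) + 1) 0 s
      with he'
    set t : Fin (m+1) := ⟨s - 1, by omega⟩ with ht
    have key : ∀ k : Fin (m+1), e' (Fin.cycleRange t k) = (k : ℕ) + 1 := by
      intro k
      rcases lt_trichotomy k t with hlt | heq | hgt
      · rw [Fin.cycleRange_of_lt hlt]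
        have hv : ((k + 1 : Fin (m+1)) : ℕ) = (k : ℕ) + 1 :=
          Fin.val_add_one_of_lt (lt_of_lt_of_le hlt (Fin.le_last t))
        have hne0 : (k + 1 : Fin (m+1)) ≠ 0 := by
          intro hc
          have := congrArg Fin.val hc
          rw [hv] at this; simp at this
        rw [he', Function.update_of_ne hne0]
        have : ((k : ℕ) + 1) < s := by
          have := hlt
          rw [Fin.lt_def] at this
          simp only [ht] at this
          omega
        simp only [hv, if_pos this]
      · subst heq
        rw [Fin.cycleRange_self, he', Function.update_self]
        simp only [ht]
        omega
      · rw [Fin.cycleRange_of_gt hgt]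
        have hk0 : k ≠ 0 := by
          intro hc; subst hc
          exact absurd hgt (by simp [Fin.le_def])
        have hks : ¬ ((k : ℕ) < s) := by
          rw [Fin.lt_def] at hgt
          simp only [ht] at hgt
          omega
        rw [he', Function.update_of_ne hk0, if_neg hks]
    have hperm := bracket_permute (p := p) e' (Fin.cycleRange t)
    have hcomp : e' ∘ (Fin.cycleRange t) =
        (fun k : Fin (m+1) => if (k : ℕ) < 0 then (k : ℕ) else (k : ℕ) + 1) := by
      funext k
      simp [key k]
    rw [hcomp] at hperm
    have hsign : ((Equiv.Perm.sign (Fin.cycleRange t) : ℤ) :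
        MvPolynomial (Fin (m+1)) (ZMod p)) = (-1) ^ (s - 1) := by
      rw [Fin.sign_cycleRange]
      push_cast
      norm_num [ht]
    rw [hsign] at hperm
    have h2 : ((-1 : MvPolynomial (Fin (m+1)) (ZMod p)) ^ (s-1)) * ((-1) ^ (s-1)) = 1 := by
      rw [← pow_add]
      exact Even.neg_one_pow ⟨s - 1, rfl⟩
    rw [hperm, ← mul_assoc, h2, one_mul]
  · have hk' : (k : ℕ) ≠ 0 := fun hc => hk (Fin.ext hc)
    split <;> omega

private lemma prod_X_pow_eq_monomial' (f : Fin n → ℕ) :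
    (∏ j : Fin n, (X j : Poly) ^ f j) =
      monomial (∑ j : Fin n, Finsupp.single j (f j)) (1 : ZMod p) := by
  classical
  have : ∀ s : Finset (Fin n), (∏ j ∈ s, (X j : Poly) ^ f j) =
      monomial (∑ j ∈ s, Finsupp.single j (f j)) (1 : ZMod p) := by
    intro s
    induction s using Finset.induction_on with
    | empty => simp
    | insert _ _ h ih =>
      rw [Finset.prod_insert h, Finset.sum_insert h, ih, X_pow_eq_monomial, monomial_mul, one_mul]
  exact this Finset.univ

private lemma Ln_ne_zero [Fact p.Prime] (hn : 1 ≤ n) : Ln p n ≠ 0 := by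
  classical
  have hp2 : 2 ≤ p := (Fact.out : p.Prime).two_le
  haveI : Fact (1 < p) := ⟨(Fact.out : p.Prime).one_lt⟩
  set d : Fin n →₀ ℕ := ∑ j : Fin n, Finsupp.single j (p ^ (j : ℕ)) with hd
  have happly : ∀ (g : Fin n → ℕ) (j₀ : Fin n),
      (∑ j : Fin n, Finsupp.single j (g j)) j₀ = g j₀ := by
    intro g j₀
    rw [Finsupp.finset_sum_apply]
    simp [Finsupp.single_apply]
  have hcoeff : MvPolynomial.coeff d (Ln p n) = 1 := by
    unfold Ln bracket
    rw [Matrix.det_apply', MvPolynomial.coeff_sum]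
    have hterm : ∀ σ : Equiv.Perm (Fin n),
        MvPolynomial.coeff d ((((Equiv.Perm.sign σ : ℤ)) : Poly) *
          ∏ i : Fin n, (Matrix.of fun k j : Fin n => (X j : Poly) ^ p ^ (k : ℕ)) (σ i) i) =
        if (∑ j : Fin n, Finsupp.single j (p ^ ((σ j : Fin n) : ℕ))) = d
          then (((Equiv.Perm.sign σ : ℤ)) : ZMod p) else 0 := by
      intro σ
      simp only [Matrix.of_apply]
      rw [show (∏ i : Fin n, (X i : Poly) ^ p ^ ((σ i : Fin n) : ℕ)) =
          monomial (∑ j : Fin n, Finsupp.single j (p ^ ((σ j : Fin n) : ℕ))) (1 : ZMod p) from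
          prod_X_pow_eq_monomial' _]
      rw [show (((Equiv.Perm.sign σ : ℤ)) : Poly) = C (((Equiv.Perm.sign σ : ℤ)) : ZMod p) from
        (map_intCast (C : ZMod p →+* Poly) _).symm]
      rw [MvPolynomial.C_mul_monomial, MvPolynomial.coeff_monomial, mul_one]
    rw [Finset.sum_congr rfl (fun σ _ => hterm σ)]
    rw [Finset.sum_eq_single (1 : Equiv.Perm (Fin n))]
    · simp [hd]
    · intro σ _ hσ
      rw [if_neg]
      intro hc
      apply hσ
      ext j
      have := congrArg (fun f => f j) hc
      simp only [hd] at this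
      rw [happly, happly] at this
      have := Nat.pow_right_injective hp2 this
      simpa using this
    · intro hc; exact absurd (Finset.mem_univ _) hc
  intro hzero
  rw [hzero, MvPolynomial.coeff_zero] at hcoeff
  exact one_ne_zero hcoeff.symm

end Aux

theorem stmt7 (p n : ℕ) [Fact p.Prime] (hn : 1 ≤ n)
    (Q : ℕ → MvPolynomial (Fin n) (ZMod p))
    (hQ : ∀ s < n, Lns p n s = Ln p n * Q s)
    (s i : ℕ) (hs : s < n) (hi1 : 1 ≤ i) (hin : i ≤ n) :
    (i = s → Dop p n i (Q s) = (-1 : MvPolynomial (Fin n) (ZMod p)) ^ (s - 1) * Q 0) ∧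
    (i = n → Dop p n i (Q s) = (-1 : MvPolynomial (Fin n) (ZMod p)) ^ n * Q 0 * Q s) ∧
    (i ≠ s → i ≠ n → Dop p n i (Q s) = 0) := by
  have hLn0 : Ln p n ≠ 0 := Ln_ne_zero hn
  have hQ0 : Lns p n 0 = Ln p n * Q 0 := hQ 0 hn
  have hQs : Lns p n s = Ln p n * Q s := hQ s hs
  have hleib : Dop p n i (Lns p n s) =
      Ln p n * Dop p n i (Q s) + Q s * Dop p n i (Ln p n) := by
    rw [hQs, Derivation.leibniz, smul_eq_mul, smul_eq_mul]
  refine ⟨?_, ?_, ?_⟩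
  · -- i = s
    intro his
    subst his
    have hin' : i ≠ n := by omega
    have hDLn : Dop p n i (Ln p n) = 0 := by
      rw [Ln_eq_Lns]
      exact D_Lns_zero i n hi1 hin le_rfl hin'
    have hD : Dop p n i (Lns p n i) = (-1) ^ (i - 1) * Lns p n 0 :=
      D_Lns_self i hi1 hin
    rw [hleib, hDLn, mul_zero, add_zero] at hD
    rw [hQ0] at hD
    apply mul_left_cancel₀ hLn0
    rw [hD]; ring
  · -- i = n
    intro hin'
    subst hin'
    have hns : i ≠ s := by omega
    have hDLns : Dop p i i (Lns p i s) = 0 :=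
      D_Lns_zero i s hi1 le_rfl (le_of_lt hs) hns
    have hDLn : Dop p i i (Ln p i) = (-1) ^ (i - 1) * Lns p i 0 := by
      rw [Ln_eq_Lns]
      exact D_Lns_self i hi1 le_rfl
    rw [hQ0] at hDLn
    rw [hDLns, hDLn] at hleib
    apply mul_left_cancel₀ hLn0
    have hpow : (-1 : MvPolynomial (Fin i) (ZMod p)) ^ i = -(-1) ^ (i - 1) := by
      have h1 : (-1 : MvPolynomial (Fin i) (ZMod p)) ^ (i - 1) * (-1) = (-1) ^ i := by
        rw [← pow_succ, show i - 1 + 1 = i from by omega]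
      rw [← h1]; ring
    linear_combination -hleib - Ln p i * Q 0 * Q s * hpow
  · -- other
    intro his hin'
    have hDLns : Dop p n i (Lns p n s) = 0 :=
      D_Lns_zero i s hi1 hin (le_of_lt hs) his
    have hDLn : Dop p n i (Ln p n) = 0 := by
      rw [Ln_eq_Lns]
      exact D_Lns_zero i n hi1 hin le_rfl hin'
    rw [hDLns, hDLn, mul_zero, add_zero] at hleib
    rcases mul_eq_zero.mp hleib.symm with h | h
    · exact absurd h hLn0
    · exact h
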